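/- Let A'(x, y) = b', l' <= (x,y) <= u' be an extended formulation of Ax = b, l <= x <= u. Then the Graver basis of A is contained in the projection H = {g : ∃h, (g,h) ∈ G(A')} of the Graver basis of A', in the sense that H is a test set for all integer programs with constraint matrix A, bounds l, u, and right-hand side b. -/
import Mathlib

/-- The conformal (sign-compatible) partial order on `ℤ^n` (indexed by a finite type). -/
def ConformalLE {ι : Type} (x y : ι → ℤ) : Prop :=
  ∀ i, 0 ≤ x i * y i ∧ |x i| ≤ |y i|

/-- The Graver basis of an integer matrix `A` (general finite index types). -/
def GraverBasis {α ι : Type} [Fintype α] [Fintype ι]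
    (A : Matrix α ι ℤ) : Set (ι → ℤ) :=
  {g | A.mulVec g = 0 ∧ g ≠ 0 ∧
    ∀ h : ι → ℤ, A.mulVec h = 0 → h ≠ 0 → ConformalLE h g → h = g}

/-- Feasibility for `{Ax = b, l ≤ x ≤ u}` with bounds in `ℤ ∪ {±∞}` (via `EReal`). -/
def Feasible {α ι : Type} [Fintype α] [Fintype ι] (A : Matrix α ι ℤ) (b : α → ℤ)
    (l u : ι → EReal) (x : ι → ℤ) : Prop :=
  A.mulVec x = b ∧ ∀ i, l i ≤ ((x i : ℝ) : EReal) ∧ ((x i : ℝ) : EReal) ≤ u i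

lemma int_abs_lt (a b : ℤ) (h1 : 0 ≤ a * b) (h2 : |a| ≤ |b|) (h3 : a ≠ b) : |a| < |b| := by
  rcases lt_or_eq_of_le h2 with h | h
  · exact h
  · rcases abs_eq_abs.mp h with rfl | rfl
    · exact absurd rfl h3
    · have hb : b = 0 := by nlinarith [sq_nonneg b]
      exact absurd (by rw [hb]; ring) h3

lemma conformal_refl {ι : Type} (z : ι → ℤ) : ConformalLE z z :=
  fun i => ⟨mul_self_nonneg _, le_rfl⟩

lemma conformal_trans {ι : Type} {a b c : ι → ℤ} (hab : ConformalLE a b)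
    (hbc : ConformalLE b c) : ConformalLE a c := by
  intro i
  obtain ⟨s1, l1⟩ := hab i
  obtain ⟨s2, l2⟩ := hbc i
  refine ⟨?_, le_trans l1 l2⟩
  rcases eq_or_ne (b i) 0 with hb | hb
  · have : a i = 0 := by
      have h' := l1
      rw [hb] at h'
      simpa using abs_nonpos_iff.mp (by simpa using h')
    simp [this]
  · have hb2 : 0 < b i * b i := mul_self_pos.mpr hb
    nlinarith

lemma conformal_sub {ι : Type} {h z : ι → ℤ} (hc : ConformalLE h z) :
    ConformalLE (z - h) z := by
  intro i
  obtain ⟨s, l⟩ := hc i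
  rcases abs_le.mp l with ⟨l1, l2⟩
  rcases le_or_gt 0 (z i) with hz | hz
  · rw [abs_of_nonneg hz] at l2 l1
    have hh : 0 ≤ h i := by nlinarith
    refine ⟨by simp only [Pi.sub_apply]; nlinarith, ?_⟩
    simp only [Pi.sub_apply]
    rw [abs_of_nonneg hz, abs_of_nonneg (by linarith)]
    linarith
  · rw [abs_of_neg hz] at l2 l1
    have hh : h i ≤ 0 := by nlinarith
    refine ⟨by simp only [Pi.sub_apply]; nlinarith, ?_⟩
    simp only [Pi.sub_apply]
    rw [abs_of_neg hz, abs_of_nonpos (by linarith)]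
    linarith

lemma conformal_natAbs_le {h z : ℤ} (hle : |h| ≤ |z|) : h.natAbs ≤ z.natAbs := by
  rw [Int.abs_eq_natAbs, Int.abs_eq_natAbs] at hle
  exact_mod_cast hle

lemma conformal_natAbs_lt {ι : Type} [Fintype ι] {h z : ι → ℤ}
    (hc : ConformalLE h z) (hne : h ≠ z) :
    ∑ i, (h i).natAbs < ∑ i, (z i).natAbs := by
  obtain ⟨j, hj⟩ := Function.ne_iff.mp hne
  refine Finset.sum_lt_sum (fun i _ => conformal_natAbs_le (hc i).2) ⟨j, Finset.mem_univ j, ?_⟩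
  have := int_abs_lt _ _ (hc j).1 (hc j).2 hj
  rw [Int.abs_eq_natAbs, Int.abs_eq_natAbs] at this
  exact_mod_cast this

lemma exists_graver_conformal_neg {α ι : Type} [Fintype α] [Fintype ι]
    (A : Matrix α ι ℤ) (w : ι → ℤ) :
    ∀ N : ℕ, ∀ z : ι → ℤ, (∑ i, (z i).natAbs) ≤ N → A.mulVec z = 0 → z ≠ 0 →
      (∑ i, w i * z i) < 0 →
      ∃ g ∈ GraverBasis A, ConformalLE g z ∧ ∑ i, w i * g i < 0 := by
  intro N
  induction N with
  | zero =>
    intro z hN hker hz0 _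
    exfalso
    apply hz0
    funext i
    have : (z i).natAbs = 0 := by
      have := Finset.sum_eq_zero_iff.mp (Nat.le_zero.mp hN) i (Finset.mem_univ i)
      exact this
    simpa [Int.natAbs_eq_zero] using this
  | succ N ih =>
    intro z hN hker hz0 hwz
    by_cases hz : z ∈ GraverBasis A
    · exact ⟨z, hz, conformal_refl z, hwz⟩
    · simp only [GraverBasis, Set.mem_setOf_eq, not_and] at hz
      push_neg at hz
      obtain ⟨h, hker', hh0, hconf, hne⟩ := hz hker hz0
      have hsum : ∑ i, w i * h i + ∑ i, w i * (z - h) i = ∑ i, w i * z i := by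
        rw [← Finset.sum_add_distrib]
        apply Finset.sum_congr rfl
        intro i _
        simp only [Pi.sub_apply]
        ring
      have hlt : ∑ i, (h i).natAbs < ∑ i, (z i).natAbs := conformal_natAbs_lt hconf hne
      have hzh_ne : z - h ≠ z := by
        intro hc
        apply hh0
        funext i
        have := congrFun hc i
        simp only [Pi.sub_apply] at this
        simpa using by linarith [this]
      have hlt2 : ∑ i, ((z - h) i).natAbs < ∑ i, (z i).natAbs :=
        conformal_natAbs_lt (conformal_sub hconf) hzh_ne
      rcases lt_or_ge (∑ i, w i * h i) 0 with hwh | hwh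
      · obtain ⟨g, hg, hgc, hgw⟩ := ih h (by omega) hker' hh0 hwh
        exact ⟨g, hg, conformal_trans hgc hconf, hgw⟩
      · have hwzh : ∑ i, w i * (z - h) i < 0 := by linarith
        have hker2 : A.mulVec (z - h) = 0 := by
          rw [Matrix.mulVec_sub, hker, hker']
          simp
        have hzh0 : z - h ≠ 0 := by
          intro hc
          apply hne
          funext i
          have := congrFun hc i
          simp only [Pi.sub_apply, Pi.zero_apply] at this
          linarith
        obtain ⟨g, hg, hgc, hgw⟩ := ih (z - h) (by omega) hker2 hzh0 hwzh
        exact ⟨g, hg, conformal_trans hgc (conformal_sub hconf), hgw⟩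

lemma between_of_conformal (g d : ℤ) (hs : 0 ≤ g * d) (hl : |g| ≤ |d|) :
    (0 ≤ g ∧ g ≤ d) ∨ (d ≤ g ∧ g ≤ 0) := by
  rcases le_or_gt 0 d with hd | hd
  · rw [abs_of_nonneg hd] at hl
    rcases abs_le.mp hl with ⟨h1, h2⟩
    left
    constructor
    · nlinarith
    · exact h2
  · rw [abs_of_neg hd] at hl
    rcases abs_le.mp hl with ⟨h1, h2⟩
    right
    constructor
    · linarith
    · nlinarith

lemma ereal_coe_mono {a b : ℤ} (h : a ≤ b) : ((a : ℝ) : EReal) ≤ ((b : ℝ) : EReal) := by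
  exact_mod_cast h

/-- If `A'(x,y) = b', l' ≤ (x,y) ≤ u'` is an extended formulation of
`Ax = b, l ≤ x ≤ u`, then the projection `H` of the Graver basis of `A'` onto
the `x`-variables is a test set for all integer programs with constraint
matrix `A`, bounds `l, u` and right-hand side `b`. -/
theorem graver_of_extended_formulation_is_test_set {m n m' p : ℕ}
    (A : Matrix (Fin m) (Fin n) ℤ) (b : Fin m → ℤ) (l u : Fin n → EReal)
    (A' : Matrix (Fin m') (Fin n ⊕ Fin p) ℤ) (b' : Fin m' → ℤ)
    (l' u' : (Fin n ⊕ Fin p) → EReal)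
    (hef : ∀ x : Fin n → ℤ,
      Feasible A b l u x ↔ ∃ y : Fin p → ℤ, Feasible A' b' l' u' (Sum.elim x y)) :
    ∀ (w : Fin n → ℤ) (x : Fin n → ℤ), Feasible A b l u x →
      (∃ y, Feasible A b l u y ∧ ∑ i, w i * y i < ∑ i, w i * x i) →
      ∃ g ∈ {g : Fin n → ℤ | ∃ h : Fin p → ℤ, Sum.elim g h ∈ GraverBasis A'},
        Feasible A b l u (x + g) ∧ ∑ i, w i * (x + g) i < ∑ i, w i * x i := by
  intro w x hx ⟨y, hy, hwy⟩
  obtain ⟨hx', hfx'⟩ := (hef x).mp hx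
  obtain ⟨hy', hfy'⟩ := (hef y).mp hy
  set xt := Sum.elim x hx' with hxt
  set yt := Sum.elim y hy' with hyt
  set z : Fin n ⊕ Fin p → ℤ := yt - xt with hz
  set wv : Fin n ⊕ Fin p → ℤ := Sum.elim w 0 with hwv
  have hker : A'.mulVec z = 0 := by
    rw [hz, Matrix.mulVec_sub, hfx'.1, hfy'.1]
    simp
  have hz0 : z ≠ 0 := by
    intro hc
    have : y = x := by
      funext i
      have := congrFun hc (Sum.inl i)
      simp [hz, hxt, hyt] at this
      linarith
    rw [this] at hwy
    exact lt_irrefl _ hwy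
  have hwz : ∑ i, wv i * z i < 0 := by
    rw [Fintype.sum_sum_type]
    have h2 : ∀ j : Fin p, wv (Sum.inr j) * z (Sum.inr j) = 0 := by
      intro j; simp [hwv]
    rw [Finset.sum_congr rfl (fun j _ => h2 j)]
    simp only [Finset.sum_const_zero, add_zero]
    have : ∀ i : Fin n, wv (Sum.inl i) * z (Sum.inl i) = w i * y i - w i * x i := by
      intro i; simp [hwv, hz, hxt, hyt]; ring
    rw [Finset.sum_congr rfl (fun i _ => this i), Finset.sum_sub_distrib]
    linarith
  obtain ⟨g', hg', hgc, hgw⟩ :=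
    exists_graver_conformal_neg A' wv (∑ i, (z i).natAbs) z le_rfl hker hz0 hwz
  set gx : Fin n → ℤ := fun i => g' (Sum.inl i) with hgx
  set gy : Fin p → ℤ := fun j => g' (Sum.inr j) with hgy
  have hgsplit : Sum.elim gx gy = g' := by
    funext i; cases i <;> rfl
  refine ⟨gx, ⟨gy, by rw [hgsplit]; exact hg'⟩, ?_, ?_⟩
  · -- Feasibility of x + gx
    apply (hef (x + gx)).mpr
    refine ⟨hx' + gy, ?_⟩
    have heq : Sum.elim (x + gx) (hx' + gy) = xt + g' := by
      funext i; cases i <;> simp [hxt, hgx, hgy]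
    rw [heq]
    constructor
    · rw [Matrix.mulVec_add, hfx'.1, hg'.1, add_zero]
    · intro i
      obtain ⟨hs, hl⟩ := hgc i
      have hd : z i = yt i - xt i := by simp [hz]
      rw [hd] at hs hl
      rcases between_of_conformal _ _ hs hl with ⟨h1, h2⟩ | ⟨h1, h2⟩
      · constructor
        · exact le_trans (hfx'.2 i).1 (ereal_coe_mono (by simp only [Pi.add_apply]; linarith))
        · exact le_trans (ereal_coe_mono (show (xt + g') i ≤ yt i by
            simp only [Pi.add_apply]; linarith)) (hfy'.2 i).2
      · constructor
        · exact le_trans (hfy'.2 i).1 (ereal_coe_mono (show yt i ≤ (xt + g') i by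
            simp only [Pi.add_apply]; linarith))
        · exact le_trans (ereal_coe_mono (show (xt + g') i ≤ xt i by
            simp only [Pi.add_apply]; linarith)) (hfx'.2 i).2
  · -- Objective improvement
    have hsplit : ∑ i, wv i * g' i = ∑ i, w i * gx i := by
      rw [Fintype.sum_sum_type]
      have h2 : ∀ j : Fin p, wv (Sum.inr j) * g' (Sum.inr j) = 0 := by
        intro j; simp [hwv]
      rw [Finset.sum_congr rfl (fun j _ => h2 j)]
      simp [hwv, hgx]
    have : ∑ i, w i * (x + gx) i = ∑ i, w i * x i + ∑ i, w i * gx i := by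
      rw [← Finset.sum_add_distrib]
      apply Finset.sum_congr rfl
      intro i _
      simp only [Pi.add_apply]
      ring
    rw [this]
    rw [hsplit] at hgw
    linarith
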